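/- arXiv:1001.2893 — 2 statements merged into one kernel-verified Lean document; each statement's English description precedes it below -/
import Mathlib

section
/- Let ω = e^{2πi/3}. The polynomial map φ_R: ℂ³ → ℂ³ defined by φ_R(X,Y,Z) = (XYZ, X³+Y³+Z³, (X³+ωY³+ω²Z³)(X³+ω²Y³+ωZ³)) is surjective. -/
noncomputable section
open Complex

/-- ω = e^{2πi/3}, a primitive cube root of unity. -/
def ω : ℂ := Complex.exp (2 * Real.pi * Complex.I / 3)

/-- The polynomial map φ_R : ℂ³ → ℂ³,
(X,Y,Z) ↦ (XYZ, X³+Y³+Z³, (X³+ωY³+ω²Z³)(X³+ω²Y³+ωZ³)). -/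
def φR : ℂ × ℂ × ℂ → ℂ × ℂ × ℂ := fun v =>
  (v.1 * v.2.1 * v.2.2,
   v.1 ^ 3 + v.2.1 ^ 3 + v.2.2 ^ 3,
   (v.1 ^ 3 + ω * v.2.1 ^ 3 + ω ^ 2 * v.2.2 ^ 3) *
     (v.1 ^ 3 + ω ^ 2 * v.2.1 ^ 3 + ω * v.2.2 ^ 3))

/-! With `U, V, W = X³, Y³, Z³`, the map is `(XYZ, e₁, e₁² - 3e₂)` in the elementary symmetric
functions of `U, V, W`, because `ω² + ω + 1 = 0`. So for a target `(a, b, c)` it suffices to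
find `U, V, W` with `e₁ = b`, `e₂ = (b² - c)/3`, `e₃ = a³` — the roots of a cubic — and then cube
roots of them whose product is `a`: take cube roots `y, z` of `V, W` and `X = a / (yz)` (if `yz = 0`,
then `a = 0` and any cube root of `U` will do). -/

theorem sq_add_self_add_one_eq_zero_of_isPrimitiveRoot {K : Type*} [CommRing K] [IsDomain K]
    {ζ : K} (hζ : IsPrimitiveRoot ζ 3) : ζ ^ 2 + ζ + 1 = 0 := by
  have h := hζ.geom_sum_eq_zero (by norm_num)
  simp only [Finset.sum_range_succ, Finset.sum_range_zero] at h
  linear_combination h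

theorem mul_twisted_sums_eq {R : Type*} [CommRing R] {ζ : R} (hζ : ζ ^ 2 + ζ + 1 = 0)
    (U V W : R) :
    (U + ζ * V + ζ ^ 2 * W) * (U + ζ ^ 2 * V + ζ * W)
      = (U + V + W) ^ 2 - 3 * (U * V + U * W + V * W) := by
  linear_combination (U * V + U * W + (ζ - 1) * (V ^ 2 + W ^ 2) + (ζ ^ 2 - ζ + 1) * V * W) * hζ

namespace IsAlgClosed

variable {K : Type*} [Field K] [IsAlgClosed K]

open Polynomial in
theorem exists_elementarySymmetric_eq (e₁ e₂ e₃ : K) :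
    ∃ u v w : K, u + v + w = e₁ ∧ u * v + u * w + v * w = e₂ ∧ u * v * w = e₃ := by
  obtain ⟨u, hu⟩ := exists_root (X ^ 3 - C e₁ * X ^ 2 + C e₂ * X - C e₃)
    ((show _ = ((3 : ℕ) : WithBot ℕ) by compute_degree!).trans_ne (by decide))
  -- `v, w` are the roots of `t² - (e₁ - u) t + (e₂ - u (e₁ - u))`
  obtain ⟨v, hv⟩ := exists_root (X ^ 2 - C (e₁ - u) * X + C (e₂ - u * (e₁ - u)))
    ((show _ = ((2 : ℕ) : WithBot ℕ) by compute_degree!).trans_ne (by decide))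
  simp only [IsRoot, eval_add, eval_sub, eval_mul, eval_pow, eval_C, eval_X] at hu hv
  refine ⟨u, v, e₁ - u - v, by ring, by linear_combination -hv, ?_⟩
  linear_combination hu - u * hv

theorem exists_pow_eq_of_mul_eq_pow {n : ℕ} (hn : n ≠ 0) {u v a : K} (h : u * v = a ^ n) :
    ∃ x y : K, x ^ n = u ∧ y ^ n = v ∧ x * y = a := by
  obtain ⟨y, rfl⟩ := exists_pow_nat_eq v (Nat.pos_of_ne_zero hn)
  by_cases hy : y = 0
  · obtain ⟨x, rfl⟩ := exists_pow_nat_eq u (Nat.pos_of_ne_zero hn)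
    have ha : a = 0 := by simpa [hy, zero_pow hn, eq_comm, hn] using h
    exact ⟨x, y, rfl, rfl, by simp [hy, ha]⟩
  · refine ⟨a / y, y, ?_, rfl, div_mul_cancel₀ a hy⟩
    rw [div_pow, ← h, mul_div_cancel_right₀ u (pow_ne_zero n hy)]

theorem exists_pow_eq_of_mul_mul_eq_pow {n : ℕ} (hn : n ≠ 0) {u v w a : K}
    (h : u * v * w = a ^ n) :
    ∃ x y z : K, x ^ n = u ∧ y ^ n = v ∧ z ^ n = w ∧ x * y * z = a := by
  obtain ⟨s, z, hs, rfl, rfl⟩ := exists_pow_eq_of_mul_eq_pow hn h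
  obtain ⟨x, y, rfl, rfl, rfl⟩ := exists_pow_eq_of_mul_eq_pow hn hs.symm
  exact ⟨x, y, z, rfl, rfl, rfl, rfl⟩

end IsAlgClosed

theorem ω_sq_add_ω_add_one : ω ^ 2 + ω + 1 = 0 :=
  sq_add_self_add_one_eq_zero_of_isPrimitiveRoot <| by
    simpa [ω] using Complex.isPrimitiveRoot_exp 3 (by norm_num)

/-- φ_R is surjective. -/
theorem φR_surjective : Function.Surjective φR := by
  rintro ⟨a, b, c⟩
  obtain ⟨u, v, w, he₁, he₂, he₃⟩ :=
    IsAlgClosed.exists_elementarySymmetric_eq b ((b ^ 2 - c) / 3) (a ^ 3)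
  obtain ⟨x, y, z, rfl, rfl, rfl, rfl⟩ :=
    IsAlgClosed.exists_pow_eq_of_mul_mul_eq_pow three_ne_zero he₃
  refine ⟨(x, y, z), Prod.ext rfl (Prod.ext he₁ ?_)⟩
  change (x ^ 3 + ω * y ^ 3 + ω ^ 2 * z ^ 3) * (x ^ 3 + ω ^ 2 * y ^ 3 + ω * z ^ 3) = c
  rw [mul_twisted_sums_eq ω_sq_add_ω_add_one, he₁, he₂]
  ring
end
end

section
/- Let ω = e^{2πi/3}, let g₁ = diag(1,ω,ω²), let g₂ be the cyclic permutation matrix sending (X,Y,Z) to (Z,X,Y), and let Γ ⊆ SL(3,ℂ) be the group they generate, acting on ℂ[X,Y,Z] by linear substitution. Then the ℂ-vector space of Γ-invariant homogeneous polynomials of degree n has dimension 0 if n is not divisible by 3, and dimension 1 + d(d+1)/2 if n = 3d. -/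
noncomputable section
open MvPolynomial Complex

/-- g₁ = diag(1, ω, ω²). -/
def g₁ : Matrix (Fin 3) (Fin 3) ℂ := Matrix.diagonal ![1, ω, ω ^ 2]

/-- g₂ : the cyclic permutation matrix sending (X,Y,Z) ↦ (Z,X,Y). -/
def g₂ : Matrix (Fin 3) (Fin 3) ℂ := Matrix.of ![![0,0,1],![1,0,0],![0,1,0]]

/-- Γ = Δ₂₇, the group of matrices generated by g₁ and g₂ (a finite group of matrices
of finite order, so the multiplicative closure is already a group). -/
def Γm : Submonoid (Matrix (Fin 3) (Fin 3) ℂ) := Submonoid.closure {g₁, g₂}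

/-- the action of a 3×3 matrix on ℂ[X,Y,Z] by linear substitution of the variables. -/
def act (g : Matrix (Fin 3) (Fin 3) ℂ) :
    MvPolynomial (Fin 3) ℂ →ₐ[ℂ] MvPolynomial (Fin 3) ℂ :=
  aeval (fun i => ∑ j, C (g i j) * X j)

/-- The ℂ-subspace of Γ-invariant polynomials. -/
def invSub : Submodule ℂ (MvPolynomial (Fin 3) ℂ) where
  carrier := {p | ∀ g ∈ Γm, act g p = p}
  add_mem' := fun ha hb g hg => by rw [map_add, ha g hg, hb g hg]
  zero_mem' := fun g hg => map_zero (act g)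
  smul_mem' := fun c p hp g hg => by rw [map_smul, hp g hg]

/-!
`g₁` multiplies the monomial `X^a Y^b Z^c` by `ω^(b + 2c)` and `g₂` rotates its exponent
`(a, b, c) ↦ (b, c, a)`. So a polynomial is invariant iff it is supported on exponents with
`3 ∣ b + 2c` and its coefficients are constant on rotation orbits. Its support is then
rotation-stable, which forces `a ≡ b ≡ c (mod 3)`, so the degree is divisible by `3`. In degree
`3d` the orbit sums form a basis, indexed by one representative per orbit: `(d, d, d)` and
`(k - j, k + 2j, 3d - 2k - j)` for `j ≤ k < d`.
-/

theorem coeff_aeval_C_mul_X {σ R : Type*} [CommSemiring R] (w : σ → R) (p : MvPolynomial σ R)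
    (m : σ →₀ ℕ) :
    coeff m (aeval (fun i => C (w i) * X i) p) = (m.prod fun i k => w i ^ k) * coeff m p := by
  classical
  induction p using MvPolynomial.induction_on' with
  | monomial k a =>
    have : aeval (fun i => C (w i) * X i) (monomial k a) =
        monomial k ((k.prod fun i e => w i ^ e) * a) := by
      rw [aeval_monomial, monomial_eq, algebraMap_eq, C_mul, map_finsuppProd]
      simp only [mul_pow, Finsupp.prod_mul, C_pow]
      ring
    rw [this, coeff_monomial, coeff_monomial]
    split_ifs with h
    · rw [h]
    · rw [mul_zero]
  | add p q hp hq => rw [map_add, coeff_add, coeff_add, hp, hq, mul_add]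

theorem aeval_C_mul_X_eq_self_iff {σ R : Type*} [CommRing R] [IsDomain R] (w : σ → R)
    (p : MvPolynomial σ R) :
    aeval (fun i => C (w i) * X i) p = p ↔
      ∀ m, coeff m p ≠ 0 → (m.prod fun i k => w i ^ k) = 1 := by
  rw [MvPolynomial.ext_iff]
  refine forall_congr' fun m => ?_
  rw [coeff_aeval_C_mul_X]
  by_cases hm : coeff m p = 0
  · simp [hm]
  · simp [hm, mul_eq_right₀ hm]

theorem isHomogeneous_iff_degree {σ R : Type*} [CommSemiring R] {p : MvPolynomial σ R} {n : ℕ} :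
    p.IsHomogeneous n ↔ ∀ m, coeff m p ≠ 0 → m.degree = n := by
  simp [IsHomogeneous, IsWeightedHomogeneous, Finsupp.degree_eq_weight_one, Pi.one_def]

theorem coeff_sum_monomial_one {σ R : Type*} [CommSemiring R] [DecidableEq σ]
    (s : Finset (σ →₀ ℕ)) (k : σ →₀ ℕ) :
    coeff k (∑ m ∈ s, monomial m (1 : R)) = if k ∈ s then 1 else 0 := by
  simp [coeff_sum, coeff_monomial]

theorem Finsupp.ext_iff_fin_three {m m' : Fin 3 →₀ ℕ} :
    m = m' ↔ m 0 = m' 0 ∧ m 1 = m' 1 ∧ m 2 = m' 2 := by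
  simp [Finsupp.ext_iff, Fin.forall_fin_succ]

theorem degree_fin_three (m : Fin 3 →₀ ℕ) : m.degree = m 0 + m 1 + m 2 := by
  rw [Finsupp.degree_eq_sum, Fin.sum_univ_three]

theorem sum_range_add_one (d : ℕ) : ∑ k ∈ Finset.range d, (k + 1) = d * (d + 1) / 2 := by
  have := Finset.sum_range_id (d + 1)
  rw [Finset.sum_range_succ'] at this
  simpa [mul_comm] using this

theorem isPrimitiveRoot_ω : IsPrimitiveRoot ω 3 := by
  simpa [ω] using Complex.isPrimitiveRoot_exp 3 (by norm_num)

theorem act_one : act 1 = AlgHom.id ℂ (MvPolynomial (Fin 3) ℂ) :=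
  algHom_ext fun i => by simp [act, Matrix.one_apply]

theorem act_mul (g h : Matrix (Fin 3) (Fin 3) ℂ) : act (g * h) = (act h).comp (act g) :=
  algHom_ext fun i => by
    simp only [act, AlgHom.comp_apply, aeval_X, map_sum, map_mul, aeval_C, algebraMap_eq,
      Matrix.mul_apply, Finset.sum_mul, Finset.mul_sum, mul_assoc]
    exact Finset.sum_comm

theorem mem_invSub_iff {p : MvPolynomial (Fin 3) ℂ} :
    p ∈ invSub ↔ act g₁ p = p ∧ act g₂ p = p := by
  refine ⟨fun h => ⟨h g₁ (Submonoid.subset_closure (Set.mem_insert _ _)),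
    h g₂ (Submonoid.subset_closure (Set.mem_insert_of_mem _ rfl))⟩,
    fun ⟨h₁, h₂⟩ g hg => ?_⟩
  induction hg using Submonoid.closure_induction with
  | mem g hg =>
    rcases hg with rfl | rfl
    · exact h₁
    · exact h₂
  | one => rw [act_one, AlgHom.id_apply]
  | mul g h _ _ hg hh => rw [act_mul, AlgHom.comp_apply, hg, hh]

theorem act_diagonal (w : Fin 3 → ℂ) :
    act (Matrix.diagonal w) = aeval fun i => C (w i) * X i := by
  simp [act, Matrix.diagonal_apply, apply_ite C]

theorem act_g₁_eq_self_iff {p : MvPolynomial (Fin 3) ℂ} :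
    act g₁ p = p ↔ ∀ m, coeff m p ≠ 0 → 3 ∣ m 1 + 2 * m 2 := by
  rw [g₁, act_diagonal, aeval_C_mul_X_eq_self_iff]
  refine forall₂_congr fun m _ => ?_
  rw [Finsupp.prod_fintype _ _ (by simp), Fin.prod_univ_three,
    ← isPrimitiveRoot_ω.pow_eq_one_iff_dvd]
  simp [pow_add, pow_mul]

def rot (m : Fin 3 →₀ ℕ) : Fin 3 →₀ ℕ := m.mapDomain (finRotate 3).symm

@[simp]
theorem rot_apply_zero (m : Fin 3 →₀ ℕ) : rot m 0 = m 1 := Finsupp.mapDomain_equiv_apply _ _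

@[simp]
theorem rot_apply_one (m : Fin 3 →₀ ℕ) : rot m 1 = m 2 := Finsupp.mapDomain_equiv_apply _ _

@[simp]
theorem rot_apply_two (m : Fin 3 →₀ ℕ) : rot m 2 = m 0 := Finsupp.mapDomain_equiv_apply _ _

theorem rot_rot_rot (m : Fin 3 →₀ ℕ) : rot (rot (rot m)) = m := by
  simp [Finsupp.ext_iff_fin_three]

theorem act_g₂ : act g₂ = rename (finRotate 3).symm :=
  algHom_ext fun i => by fin_cases i <;> simp [act, g₂, Fin.sum_univ_three, Fin.ext_iff]

theorem act_g₂_eq_self_iff {p : MvPolynomial (Fin 3) ℂ} :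
    act g₂ p = p ↔ ∀ m, coeff (rot m) p = coeff m p := by
  have rot_surjective : Function.Surjective rot := fun m => ⟨rot (rot m), rot_rot_rot m⟩
  rw [MvPolynomial.ext_iff, rot_surjective.forall, act_g₂]
  simp only [rot, coeff_rename_mapDomain _ (Equiv.injective _), eq_comm]

theorem mem_homogeneousSubmodule_inf_invSub_iff {n : ℕ} {p : MvPolynomial (Fin 3) ℂ} :
    p ∈ homogeneousSubmodule (Fin 3) ℂ n ⊓ invSub ↔
      (∀ m, coeff m p ≠ 0 → m 0 + m 1 + m 2 = n ∧ 3 ∣ m 1 + 2 * m 2) ∧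
        ∀ m, coeff (rot m) p = coeff m p := by
  simp only [Submodule.mem_inf, mem_homogeneousSubmodule, isHomogeneous_iff_degree,
    degree_fin_three, mem_invSub_iff, act_g₁_eq_self_iff, act_g₂_eq_self_iff]
  rw [← and_assoc, ← forall_and]
  simp only [imp_and]

theorem homogeneousSubmodule_inf_invSub_eq_bot {n : ℕ} (hn : ¬ 3 ∣ n) :
    homogeneousSubmodule (Fin 3) ℂ n ⊓ invSub = ⊥ := by
  refine (Submodule.eq_bot_iff _).2 fun p hp => MvPolynomial.ext _ _ fun m => ?_
  obtain ⟨hsupp, hrot⟩ := mem_homogeneousSubmodule_inf_invSub_iff.1 hp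
  by_contra hm
  have := hsupp m hm
  have := hsupp (rot m) (by rwa [hrot])
  simp only [rot_apply_zero, rot_apply_one, rot_apply_two] at this
  omega

def orbit (m : Fin 3 →₀ ℕ) : Finset (Fin 3 →₀ ℕ) := {m, rot m, rot (rot m)}

theorem self_mem_orbit (m : Fin 3 →₀ ℕ) : m ∈ orbit m := by simp [orbit]

theorem orbit_rot (m : Fin 3 →₀ ℕ) : orbit (rot m) = orbit m := by
  ext k
  simp only [orbit, rot_rot_rot, Finset.mem_insert, Finset.mem_singleton]
  tauto

theorem mem_orbit_iff {k m : Fin 3 →₀ ℕ} : k ∈ orbit m ↔ orbit k = orbit m := by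
  refine ⟨fun h => ?_, fun h => h ▸ self_mem_orbit k⟩
  simp only [orbit, Finset.mem_insert, Finset.mem_singleton] at h
  rcases h with rfl | rfl | rfl <;> simp only [orbit_rot]

theorem coeff_eq_of_mem_orbit {p : MvPolynomial (Fin 3) ℂ}
    (hp : ∀ m, coeff (rot m) p = coeff m p) {k m : Fin 3 →₀ ℕ} (h : k ∈ orbit m) :
    coeff k p = coeff m p := by
  simp only [orbit, Finset.mem_insert, Finset.mem_singleton] at h
  rcases h with rfl | rfl | rfl
  · rfl
  · exact hp m
  · rw [hp, hp]

def orbitSum (m : Fin 3 →₀ ℕ) : MvPolynomial (Fin 3) ℂ := ∑ k ∈ orbit m, monomial k 1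

theorem coeff_orbitSum (m k : Fin 3 →₀ ℕ) :
    coeff k (orbitSum m) = if orbit k = orbit m then 1 else 0 := by
  simp only [orbitSum, coeff_sum_monomial_one, mem_orbit_iff]

def IsOrbitRep (m : Fin 3 →₀ ℕ) : Prop :=
  m 0 ≤ m 1 ∧ m 0 < m 2 ∨ m 0 = m 1 ∧ m 1 = m 2

instance : DecidablePred IsOrbitRep := fun m => by unfold IsOrbitRep; infer_instance

theorem exists_isOrbitRep_mem_orbit (m : Fin 3 →₀ ℕ) : ∃ t ∈ orbit m, IsOrbitRep t := by
  have : IsOrbitRep m ∨ IsOrbitRep (rot m) ∨ IsOrbitRep (rot (rot m)) := by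
    simp only [IsOrbitRep, rot_apply_zero, rot_apply_one, rot_apply_two]
    omega
  simp only [orbit, Finset.mem_insert, Finset.mem_singleton]
  rcases this with h | h | h <;> exact ⟨_, by simp, h⟩

theorem IsOrbitRep.eq_of_orbit_eq {t t' : Fin 3 →₀ ℕ} (ht : IsOrbitRep t)
    (ht' : IsOrbitRep t') (h : orbit t = orbit t') : t = t' := by
  have : t ∈ orbit t' := h ▸ self_mem_orbit t
  simp only [orbit, Finset.mem_insert, Finset.mem_singleton] at this
  rcases this with rfl | rfl | rfl
  · rfl
  all_goals
    simp only [IsOrbitRep, rot_apply_zero, rot_apply_one, rot_apply_two] at ht ht'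
    simp only [Finsupp.ext_iff_fin_three, rot_apply_zero, rot_apply_one, rot_apply_two]
    omega

def orbitReps (d : ℕ) : Finset (Fin 3 →₀ ℕ) :=
  (Finset.finsuppAntidiag Finset.univ (3 * d)).filter fun m => 3 ∣ m 1 + 2 * m 2 ∧ IsOrbitRep m

theorem mem_orbitReps {d : ℕ} {m : Fin 3 →₀ ℕ} :
    m ∈ orbitReps d ↔ m 0 + m 1 + m 2 = 3 * d ∧ 3 ∣ m 1 + 2 * m 2 ∧ IsOrbitRep m := by
  simp [orbitReps, Fin.sum_univ_three]

theorem card_orbitReps_erase (d : ℕ) :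
    ((orbitReps d).erase (Finsupp.equivFunOnFinite.symm ![d, d, d])).card = d * (d + 1) / 2 := by
  calc _ = ((Finset.range d).sigma fun k => Finset.range (k + 1)).card := by
        refine Finset.card_nbij' (fun m => ⟨m 0 + (m 1 - m 0) / 3, (m 1 - m 0) / 3⟩)
          (fun x => Finsupp.equivFunOnFinite.symm
            ![x.1 - x.2, x.1 + 2 * x.2, 3 * d - 2 * x.1 - x.2]) ?_ ?_ ?_ ?_
        all_goals
          intro x hx
          simp [mem_orbitReps, IsOrbitRep, Finsupp.ext_iff_fin_three, Sigma.ext_iff] at hx ⊢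
          omega
    _ = d * (d + 1) / 2 := by simp [sum_range_add_one]

theorem card_orbitReps (d : ℕ) : (orbitReps d).card = 1 + d * (d + 1) / 2 := by
  have hc : Finsupp.equivFunOnFinite.symm ![d, d, d] ∈ orbitReps d := by
    simp [mem_orbitReps, IsOrbitRep]
    omega
  rw [← Finset.card_erase_add_one hc, card_orbitReps_erase, add_comm]

theorem orbitSum_mem {d : ℕ} {t : Fin 3 →₀ ℕ} (ht : t ∈ orbitReps d) :
    orbitSum t ∈ homogeneousSubmodule (Fin 3) ℂ (3 * d) ⊓ invSub := by
  obtain ⟨hdeg, hdvd, -⟩ := mem_orbitReps.1 ht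
  refine mem_homogeneousSubmodule_inf_invSub_iff.2
    ⟨fun k hk => ?_, fun k => by simp [coeff_orbitSum, orbit_rot]⟩
  have hk : k ∈ orbit t := mem_orbit_iff.2 (by_contra fun h => hk (by simp [coeff_orbitSum, h]))
  simp only [orbit, Finset.mem_insert, Finset.mem_singleton] at hk
  rcases hk with rfl | rfl | rfl
  · exact ⟨hdeg, hdvd⟩
  all_goals simp only [rot_apply_zero, rot_apply_one, rot_apply_two]; omega

theorem sum_coeff_smul_orbitSum {d : ℕ} {p : MvPolynomial (Fin 3) ℂ}
    (hp : p ∈ homogeneousSubmodule (Fin 3) ℂ (3 * d) ⊓ invSub) :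
    ∑ t : orbitReps d, coeff (t : Fin 3 →₀ ℕ) p • orbitSum t = p := by
  obtain ⟨hsupp, hrot⟩ := mem_homogeneousSubmodule_inf_invSub_iff.1 hp
  ext k
  simp only [coeff_sum, coeff_smul, coeff_orbitSum, smul_eq_mul, mul_ite, mul_one, mul_zero]
  by_cases hk : coeff k p = 0
  · rw [hk]
    refine Finset.sum_eq_zero fun t _ => ?_
    split_ifs with h
    · rw [← coeff_eq_of_mem_orbit hrot (mem_orbit_iff.2 h), hk]
    · rfl
  obtain ⟨t₀, ht₀k, ht₀⟩ := exists_isOrbitRep_mem_orbit k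
  have hcoeff : coeff t₀ p = coeff k p := coeff_eq_of_mem_orbit hrot ht₀k
  have ht₀mem : t₀ ∈ orbitReps d := by
    obtain ⟨hdeg, hdvd⟩ := hsupp t₀ (hcoeff ▸ hk)
    exact mem_orbitReps.2 ⟨hdeg, hdvd, ht₀⟩
  have horb : orbit k = orbit t₀ := (mem_orbit_iff.1 ht₀k).symm
  rw [Fintype.sum_eq_single ⟨t₀, ht₀mem⟩, if_pos horb, hcoeff]
  intro t hne
  rw [if_neg]
  exact fun h => hne (Subtype.ext
    (IsOrbitRep.eq_of_orbit_eq (mem_orbitReps.1 t.2).2.2 ht₀ (h.symm.trans horb)))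

theorem coeff_sum_smul_orbitSum {d : ℕ} (c : orbitReps d → ℂ) (t : orbitReps d) :
    coeff t (∑ s : orbitReps d, c s • orbitSum s) = c t := by
  simp only [coeff_sum, coeff_smul, coeff_orbitSum, smul_eq_mul, mul_ite, mul_one, mul_zero]
  rw [Fintype.sum_eq_single t, if_pos rfl]
  intro s hne
  rw [if_neg]
  exact fun h => hne (Subtype.ext
    (IsOrbitRep.eq_of_orbit_eq (mem_orbitReps.1 s.2).2.2 (mem_orbitReps.1 t.2).2.2 h.symm))

def orbitRepsCoeffEquiv (d : ℕ) :
    ↥(homogeneousSubmodule (Fin 3) ℂ (3 * d) ⊓ invSub) ≃ₗ[ℂ] (orbitReps d → ℂ) where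
  toFun p t := coeff t (p : MvPolynomial (Fin 3) ℂ)
  map_add' p q := by ext; simp
  map_smul' c p := by ext; simp
  invFun c := ⟨∑ t : orbitReps d, c t • orbitSum t,
    Submodule.sum_mem _ fun t _ => Submodule.smul_mem _ _ (orbitSum_mem t.2)⟩
  left_inv p := Subtype.ext (sum_coeff_smul_orbitSum p.2)
  right_inv c := funext (coeff_sum_smul_orbitSum c)

/-- The space of Γ-invariant homogeneous polynomials of degree n has dimension 0
when 3 ∤ n, and dimension 1 + d(d+1)/2 when n = 3d. -/
theorem dim_invariant_homogeneous (n : ℕ) :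
    (¬ (3 ∣ n) →
      Module.finrank ℂ ↥(homogeneousSubmodule (Fin 3) ℂ n ⊓ invSub) = 0) ∧
    (∀ d : ℕ, n = 3 * d →
      Module.finrank ℂ ↥(homogeneousSubmodule (Fin 3) ℂ n ⊓ invSub) =
        1 + d * (d + 1) / 2) := by
  refine ⟨fun hn => ?_, fun d hd => ?_⟩
  · rw [homogeneousSubmodule_inf_invSub_eq_bot hn, finrank_bot]
  · subst hd
    rw [(orbitRepsCoeffEquiv d).finrank_eq, Module.finrank_fintype_fun_eq_card, Fintype.card_coe,
      card_orbitReps]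
end
end
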